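/- arXiv:2112.05550 — 3 statements merged into one kernel-verified Lean document; each statement's English description precedes it below -/
import Mathlib

section
/- Let R be a discrete valuation ring with uniformizer t and fraction field K, and let n ≥ 1 and 0 ≤ k < n be integers. Inside the Laurent polynomial ring K[x,x⁻¹], identify R[x,x⁻¹], R[y,y⁻¹] (with y = tⁿ/x), and R[x, tⁿ/x] as subrings. Then the intersection R[x,x⁻¹] ∩ (R[(tⁿ/x), (tⁿ/x)⁻¹]·t^k) equals the ideal R[x, tⁿ/x]·x + R[x, tⁿ/x]·t^k of R[x, tⁿ/x]. -/
/-!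
Writing `u` for the image of `t` in `K`, all rings in sight are cut out coefficientwise: a
Laurent polynomial lies in `R[x,x⁻¹]`, `R[y,y⁻¹]` or `R[x,tⁿ/x]` iff its coefficient of `xⁱ`
lies in `R·u^c(i)` with `c(i) = 0`, `-ni` or `max(0, -ni)` respectively. Such a `c` is a
maximum of two linear functions, hence subadditive, so these coefficient conditions define
subrings, and they are generated by the monomials of degree `0` and `±1`. Multiplying by `tᵏ`
shifts `c` by `k`, and the lattices `R·uᵃ` form a chain, so the left-hand side is the set of `f`
whose `xⁱ`-coefficient lies in `R·u^max(0, k - ni)`. The right-hand side is the same set: since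
`k ≤ n`, a monomial of positive degree in it is `x` times an element of `R[x,tⁿ/x]`, and one of
nonpositive degree is `tᵏ` times one.
-/

open LaurentPolynomial

noncomputable section

/-- The image of `R` in `K[x,x⁻¹]` via constants. -/
def iotaR (R K : Type*) [CommRing R] [Field K] [Algebra R K] :
    R →+* LaurentPolynomial K :=
  LaurentPolynomial.C.comp (algebraMap R K)

/-- The subring `R[x,x⁻¹]` of `K[x,x⁻¹]`. -/
def ringA (R K : Type*) [CommRing R] [Field K] [Algebra R K] :
    Subring (LaurentPolynomial K) :=
  Subring.closure (Set.range (iotaR R K) ∪ {LaurentPolynomial.T 1, LaurentPolynomial.T (-1)})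

/-- The subring `R[y,y⁻¹]` of `K[x,x⁻¹]`, where `y = tⁿ/x`. -/
def ringB (R K : Type*) [CommRing R] [Field K] [Algebra R K] (t : R) (n : ℕ) :
    Subring (LaurentPolynomial K) :=
  Subring.closure (Set.range (iotaR R K) ∪
    {iotaR R K t ^ n * LaurentPolynomial.T (-1),
     LaurentPolynomial.C (algebraMap R K t)⁻¹ ^ n * LaurentPolynomial.T 1})

/-- The subring `R[x, tⁿ/x]` of `K[x,x⁻¹]`. -/
def ringM (R K : Type*) [CommRing R] [Field K] [Algebra R K] (t : R) (n : ℕ) :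
    Subring (LaurentPolynomial K) :=
  Subring.closure (Set.range (iotaR R K) ∪
    {LaurentPolynomial.T 1, iotaR R K t ^ n * LaurentPolynomial.T (-1)})

section ZPowSpan

variable {R K : Type*} [CommRing R] [Field K] [Algebra R K] {t : R}

lemma mem_span_zpow_iff {m : ℤ} {a : K} :
    a ∈ R ∙ algebraMap R K t ^ m ↔
      ∃ r : R, algebraMap R K r * algebraMap R K t ^ m = a := by
  simp [Submodule.mem_span_singleton, Algebra.smul_def]

lemma mul_mem_span_zpow (ht : algebraMap R K t ≠ 0) {l m n : ℤ} (h : l ≤ m + n) {a b : K}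
    (ha : a ∈ R ∙ algebraMap R K t ^ m) (hb : b ∈ R ∙ algebraMap R K t ^ n) :
    a * b ∈ R ∙ algebraMap R K t ^ l := by
  obtain ⟨r, rfl⟩ := mem_span_zpow_iff.1 ha
  obtain ⟨s, rfl⟩ := mem_span_zpow_iff.1 hb
  refine mem_span_zpow_iff.2 ⟨r * s * t ^ (m + n - l).toNat, ?_⟩
  rw [map_mul, map_mul, map_pow, ← zpow_natCast, Int.toNat_of_nonneg (by omega), mul_assoc,
    ← zpow_add₀ ht, sub_add_cancel, zpow_add₀ ht]
  ring

lemma span_zpow_antitone (ht : algebraMap R K t ≠ 0) :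
    Antitone fun m : ℤ ↦ R ∙ algebraMap R K t ^ m := fun m n h a ha ↦ by
  simpa using mul_mem_span_zpow ht (n := 0) (by simpa using h) ha (b := 1) (by simp)

lemma mem_span_zpow_max_iff (ht : algebraMap R K t ≠ 0) {m n : ℤ} {a : K} :
    a ∈ R ∙ algebraMap R K t ^ max m n ↔
      a ∈ R ∙ algebraMap R K t ^ m ∧ a ∈ R ∙ algebraMap R K t ^ n := by
  rcases le_total m n with h | h
  · rw [max_eq_right h]
    exact ⟨fun ha ↦ ⟨span_zpow_antitone ht h ha, ha⟩, And.right⟩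
  · rw [max_eq_left h]
    exact ⟨fun ha ↦ ⟨ha, span_zpow_antitone ht h ha⟩, And.left⟩

end ZPowSpan

lemma max_mul_le_max_mul_sub_add (p q i j : ℤ) :
    max (p * i) (-q * i) ≤ max (p * (i - j)) (-q * (i - j)) + max (p * j) (-q * j) := by
  rw [mul_sub, mul_sub]
  omega

namespace LaurentPolynomial

section Coeff

variable {A : Type*} [Semiring A]

lemma coeff_mul_T (f : A[T;T⁻¹]) (i j : ℤ) : (f * T j).coeff i = f.coeff (i - j) := by
  rw [T, AddMonoidAlgebra.coeff_mul_single_apply, mul_one, sub_eq_add_neg]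

lemma coeff_mul_C (f : A[T;T⁻¹]) (a : A) (i : ℤ) : (f * C a).coeff i = f.coeff i * a := by
  rw [← single_eq_C, AddMonoidAlgebra.coeff_mul_single_apply, neg_zero, add_zero]

lemma C_mul_T_pow (a : A) (j : ℤ) (m : ℕ) : (C a * T j) ^ m = C (a ^ m) * T (m * j) := by
  rw [(commute_T j (C a)).symm.mul_pow, ← map_pow, T_pow]

lemma mem_of_forall_C_mul_T_mem {S : Type*} [SetLike S A[T;T⁻¹]]
    [AddSubmonoidClass S A[T;T⁻¹]] {X : S} {f : A[T;T⁻¹]} (h : ∀ i, C (f.coeff i) * T i ∈ X) :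
    f ∈ X := by
  rw [← AddMonoidAlgebra.sum_coeff_single f, Finsupp.sum]
  exact sum_mem fun i _ ↦ single_eq_C_mul_T (f.coeff i) i ▸ h i

end Coeff

variable {R : Type*} (K : Type*) [CommRing R] [Field K] [Algebra R K]

def coeffLattice (t : R) (c : ℤ → ℤ) : AddSubgroup K[T;T⁻¹] where
  carrier := {f | ∀ i, f.coeff i ∈ R ∙ algebraMap R K t ^ c i}
  add_mem' hf hg i := add_mem (hf i) (hg i)
  zero_mem' _ := zero_mem _
  neg_mem' hf i := neg_mem (hf i)

variable {K} {t : R}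

lemma mem_coeffLattice {c : ℤ → ℤ} {f : K[T;T⁻¹]} :
    f ∈ coeffLattice K t c ↔ ∀ i, f.coeff i ∈ R ∙ algebraMap R K t ^ c i :=
  Iff.rfl

lemma C_mul_T_mem_coeffLattice {c : ℤ → ℤ} {a : K} {j : ℤ}
    (ha : a ∈ R ∙ algebraMap R K t ^ c j) : C a * T j ∈ coeffLattice K t c := by
  intro i
  rw [← single_eq_C_mul_T, AddMonoidAlgebra.coeff_single, Finsupp.single_apply]
  split_ifs with h
  · exact h ▸ ha
  · exact zero_mem _

lemma mul_C_mem_coeffLattice (ht : algebraMap R K t ≠ 0) {c e : ℤ → ℤ} {d : ℤ}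
    (h : ∀ i, e i ≤ c i + d) {f : K[T;T⁻¹]} {a : K} (hf : f ∈ coeffLattice K t c)
    (ha : a ∈ R ∙ algebraMap R K t ^ d) : f * C a ∈ coeffLattice K t e := fun i ↦ by
  rw [coeff_mul_C]
  exact mul_mem_span_zpow ht (h i) (hf i) ha

lemma mul_T_mem_coeffLattice (ht : algebraMap R K t ≠ 0) {c e : ℤ → ℤ} {j : ℤ}
    (h : ∀ i, e i ≤ c (i - j)) {f : K[T;T⁻¹]} (hf : f ∈ coeffLattice K t c) :
    f * T j ∈ coeffLattice K t e := fun i ↦ by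
  rw [coeff_mul_T]
  exact span_zpow_antitone ht (h i) (hf (i - j))

lemma mem_of_mem_coeffLattice {S : Type*} [SetLike S K[T;T⁻¹]]
    [AddSubmonoidClass S K[T;T⁻¹]] {X : S} {c : ℤ → ℤ}
    (hX : ∀ i, ∀ a ∈ R ∙ algebraMap R K t ^ c i, C a * T i ∈ X) {f : K[T;T⁻¹]}
    (hf : f ∈ coeffLattice K t c) : f ∈ X :=
  mem_of_forall_C_mul_T_mem fun i ↦ hX i _ (hf i)

lemma mem_coeffLattice_max_iff (ht : algebraMap R K t ≠ 0) {c d : ℤ → ℤ} {f : K[T;T⁻¹]} :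
    f ∈ coeffLattice K t (fun i ↦ max (c i) (d i)) ↔
      f ∈ coeffLattice K t c ∧ f ∈ coeffLattice K t d := by
  simp only [mem_coeffLattice, mem_span_zpow_max_iff ht, forall_and]

lemma exists_mem_coeffLattice_mul_C_iff (ht : algebraMap R K t ≠ 0) {c : ℤ → ℤ} {d : ℤ}
    {f : K[T;T⁻¹]} :
    (∃ b ∈ coeffLattice K t c, f = b * C (algebraMap R K t ^ d)) ↔
      f ∈ coeffLattice K t fun i ↦ c i + d := by
  constructor
  · rintro ⟨b, hb, rfl⟩
    exact mul_C_mem_coeffLattice ht (fun _ ↦ le_rfl) hb (Submodule.mem_span_singleton_self _)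
  · intro hf
    refine ⟨f * C (algebraMap R K t ^ (-d)), ?_, ?_⟩
    · exact mul_C_mem_coeffLattice ht (fun _ ↦ by omega) hf (Submodule.mem_span_singleton_self _)
    · rw [mul_assoc, ← map_mul, ← zpow_add₀ ht, neg_add_cancel, zpow_zero, map_one, mul_one]

variable (K t) in
def coeffSubring (p q : ℤ) (ht : algebraMap R K t ≠ 0) : Subring K[T;T⁻¹] where
  toAddSubgroup := coeffLattice K t fun i ↦ max (p * i) (-q * i)
  one_mem' := by
    have h : C 1 * T 0 ∈ coeffLattice K t fun i ↦ max (p * i) (-q * i) :=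
      C_mul_T_mem_coeffLattice (by simp)
    rwa [map_one, T_zero, mul_one] at h
  mul_mem' {f g} hf hg := by
    refine mem_of_mem_coeffLattice (X := (coeffLattice K t _).comap (AddMonoidHom.mulRight g))
      (fun i a ha ↦ ?_) hf
    change C a * T i * g ∈ coeffLattice K t _
    rw [show C a * T i * g = g * C a * T i by ring]
    exact mul_T_mem_coeffLattice ht (fun l ↦ max_mul_le_max_mul_sub_add p q l i)
      (mul_C_mem_coeffLattice ht (fun _ ↦ le_rfl) hg ha)

lemma mem_coeffSubring {p q : ℤ} {ht : algebraMap R K t ≠ 0} {f : K[T;T⁻¹]} :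
    f ∈ coeffSubring K t p q ht ↔ f ∈ coeffLattice K t fun i ↦ max (p * i) (-q * i) :=
  Iff.rfl

lemma closure_eq_coeffSubring (ht : algebraMap R K t ≠ 0) {p q : ℤ} (hpq : 0 ≤ p + q) :
    Subring.closure (Set.range (iotaR R K) ∪
      {C (algebraMap R K t ^ p) * T 1, C (algebraMap R K t ^ q) * T (-1)}) =
      coeffSubring K t p q ht := by
  refine le_antisymm (Subring.closure_le.2 ?_) fun f hf ↦ ?_
  · rintro _ (⟨r, rfl⟩ | rfl | rfl)
    · rw [iotaR, RingHom.comp_apply, ← mul_one (C _), ← T_zero]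
      exact C_mul_T_mem_coeffLattice (mem_span_zpow_iff.2 ⟨r, by simp⟩)
    · exact C_mul_T_mem_coeffLattice (by
        rw [show max (p * 1) (-q * 1) = p by omega]; exact Submodule.mem_span_singleton_self _)
    · exact C_mul_T_mem_coeffLattice (by
        rw [show max (p * -1) (-q * -1) = q by omega]; exact Submodule.mem_span_singleton_self _)
  refine mem_of_mem_coeffLattice (fun i a ha ↦ ?_) hf
  obtain ⟨r, rfl⟩ := mem_span_zpow_iff.1 ha
  rw [map_mul, mul_assoc]
  refine mul_mem (Subring.subset_closure (Or.inl ⟨r, rfl⟩)) ?_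
  have hm : ∀ m : ℕ, 0 ≤ (p + q) * m := fun m ↦ mul_nonneg hpq m.cast_nonneg
  obtain ⟨m, rfl | rfl⟩ := Int.eq_nat_or_neg i
  · rw [max_eq_left (by linarith [hm m]), mul_comm, zpow_mul, zpow_natCast, ← mul_one (m : ℤ),
      ← C_mul_T_pow]
    exact pow_mem (Subring.subset_closure (by simp)) m
  · rw [max_eq_right (by linarith [hm m]), neg_mul_neg, mul_comm, zpow_mul, zpow_natCast,
      ← mul_neg_one (m : ℤ), ← C_mul_T_pow]
    exact pow_mem (Subring.subset_closure (by simp)) m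

lemma mul_T_add_mul_C_mem_coeffLattice (ht : algebraMap R K t ≠ 0) {n k : ℕ} (hk : k ≤ n)
    {m m' : K[T;T⁻¹]} (hm : m ∈ coeffSubring K t 0 n ht) (hm' : m' ∈ coeffSubring K t 0 n ht) :
    m * T 1 + m' * C (algebraMap R K t ^ (k : ℤ)) ∈
      coeffLattice K t fun i ↦ max 0 (k - n * i) := by
  refine add_mem (mul_T_mem_coeffLattice ht (fun i ↦ ?_) hm)
    (mul_C_mem_coeffLattice ht (fun i ↦ ?_) hm' (Submodule.mem_span_singleton_self _))
  · simp only [zero_mul, neg_mul, mul_sub, mul_one]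
    omega
  · simp only [zero_mul, neg_mul]
    omega

lemma mem_span_T_one_C_zpow_of_mem_coeffLattice (ht : algebraMap R K t ≠ 0) {n k : ℕ}
    (hk : k ≤ n) {f : K[T;T⁻¹]} (hf : f ∈ coeffLattice K t fun i ↦ max 0 (k - n * i)) :
    f ∈ Submodule.span (coeffSubring K t 0 n ht) {T 1, C (algebraMap R K t ^ (k : ℤ))} := by
  set M := coeffSubring K t 0 n ht
  set S := Submodule.span M {T 1, C (algebraMap R K t ^ (k : ℤ))}
  refine mem_of_mem_coeffLattice (fun i a ha ↦ ?_) hf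
  rcases le_or_gt 1 i with hi | hi
  · have hx : C a * T (i - 1) ∈ M := by
      refine C_mul_T_mem_coeffLattice (span_zpow_antitone ht ?_ ha)
      have : 0 ≤ (n : ℤ) * (i - 1) := mul_nonneg n.cast_nonneg (by omega)
      simp only [zero_mul, neg_mul, mul_sub, mul_one] at this ⊢
      omega
    convert S.smul_mem (⟨_, hx⟩ : M) (Submodule.subset_span (Set.mem_insert _ _)) using 1
    change C a * T i = C a * T (i - 1) * T 1
    rw [mul_T_assoc, sub_add_cancel]
  · have hx : C (a * algebraMap R K t ^ (-k : ℤ)) * T i ∈ M := by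
      refine C_mul_T_mem_coeffLattice
        (mul_mem_span_zpow ht ?_ ha (Submodule.mem_span_singleton_self _))
      have : (n : ℤ) * i ≤ 0 := mul_nonpos_of_nonneg_of_nonpos n.cast_nonneg (by omega)
      simp only [zero_mul, neg_mul]
      omega
    convert S.smul_mem (⟨_, hx⟩ : M) (Submodule.subset_span (Set.mem_insert_of_mem _ rfl))
      using 1
    change C a * T i = C (a * algebraMap R K t ^ (-k : ℤ)) * T i * C (algebraMap R K t ^ (k : ℤ))
    rw [map_mul, mul_right_comm _ (T i), mul_assoc (C a), ← map_mul, ← zpow_add₀ ht,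
      neg_add_cancel, zpow_zero, map_one, mul_one]

end LaurentPolynomial

section Rings

open LaurentPolynomial

variable {R K : Type*} [CommRing R] [Field K] [Algebra R K] {t : R}

lemma ringA_eq_coeffSubring (ht : algebraMap R K t ≠ 0) :
    ringA R K = coeffSubring K t 0 0 ht := by
  rw [← closure_eq_coeffSubring ht le_rfl, ringA]
  simp

lemma ringB_eq_coeffSubring (ht : algebraMap R K t ≠ 0) (n : ℕ) :
    ringB R K t n = coeffSubring K t (-n) n ht := by
  rw [← closure_eq_coeffSubring ht (by simp), ringB, Set.pair_comm]
  simp [iotaR, zpow_neg, ← inv_pow]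

lemma ringM_eq_coeffSubring (ht : algebraMap R K t ≠ 0) (n : ℕ) :
    ringM R K t n = coeffSubring K t 0 n ht := by
  rw [← closure_eq_coeffSubring ht (by simp), ringM]
  simp [iotaR]

lemma iotaR_pow_eq_C (k : ℕ) : iotaR R K t ^ k = C (algebraMap R K t ^ (k : ℤ)) := by
  simp [iotaR]

lemma mem_ringA_and_exists_mul_iff (ht : algebraMap R K t ≠ 0) (n k : ℕ) {f : K[T;T⁻¹]} :
    (f ∈ ringA R K ∧ ∃ b ∈ ringB R K t n, f = b * iotaR R K t ^ k) ↔
      f ∈ coeffLattice K t fun i ↦ max 0 (k - n * i) := by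
  simp only [ringA_eq_coeffSubring ht, ringB_eq_coeffSubring ht, mem_coeffSubring, iotaR_pow_eq_C,
    exists_mem_coeffLattice_mul_C_iff ht, ← mem_coeffLattice_max_iff ht]
  convert Iff.rfl using 4 with i
  simp only [neg_mul, zero_mul, neg_zero, max_self]
  omega

lemma exists_mem_ringM_mul_T_add_mul_iff (ht : algebraMap R K t ≠ 0) {n k : ℕ} (hk : k ≤ n)
    {f : K[T;T⁻¹]} :
    (∃ m ∈ ringM R K t n, ∃ m' ∈ ringM R K t n, f = m * T 1 + m' * iotaR R K t ^ k) ↔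
      f ∈ coeffLattice K t fun i ↦ max 0 (k - n * i) := by
  rw [ringM_eq_coeffSubring ht, iotaR_pow_eq_C]
  constructor
  · rintro ⟨m, hm, m', hm', rfl⟩
    exact mul_T_add_mul_C_mem_coeffLattice ht hk hm hm'
  · intro hf
    obtain ⟨⟨m, hm⟩, ⟨m', hm'⟩, rfl⟩ :=
      Submodule.mem_span_pair.1 (mem_span_T_one_C_zpow_of_mem_coeffLattice ht hk hf)
    exact ⟨m, hm, m', hm', rfl⟩

end Rings

theorem statement0_general (R K : Type*) [CommRing R]
    [Field K] [Algebra R K] [IsFractionRing R K]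
    (t : R) (ht : Irreducible t) (n k : ℕ) (hk : k < n)
    (f : LaurentPolynomial K) :
    (f ∈ ringA R K ∧ ∃ b ∈ ringB R K t n, f = b * iotaR R K t ^ k) ↔
      (∃ m ∈ ringM R K t n, ∃ m' ∈ ringM R K t n,
        f = m * LaurentPolynomial.T 1 + m' * iotaR R K t ^ k) := by
  have ht' : algebraMap R K t ≠ 0 :=
    (map_ne_zero_iff _ (IsFractionRing.injective R K)).2 ht.ne_zero
  exact (mem_ringA_and_exists_mul_iff ht' n k).trans
    (exists_mem_ringM_mul_T_add_mul_iff ht' hk.le).symm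

theorem statement0 (R K : Type*) [CommRing R] [IsDomain R] [IsDiscreteValuationRing R]
    [Field K] [Algebra R K] [IsFractionRing R K]
    (t : R) (ht : Irreducible t) (n k : ℕ) (hn : 1 ≤ n) (hk : k < n)
    (f : LaurentPolynomial K) :
    (f ∈ ringA R K ∧ ∃ b ∈ ringB R K t n, f = b * iotaR R K t ^ k) ↔
      (∃ m ∈ ringM R K t n, ∃ m' ∈ ringM R K t n,
        f = m * LaurentPolynomial.T 1 + m' * iotaR R K t ^ k) :=
  statement0_general R K t ht n k hk f
end
end

section
/- Let R be a discrete valuation ring with uniformizer t, let n ≥ 1 and 0 ≤ k < n, and let A = R[x,y]/(xy − tⁿ). Then the module of relations between the generators x and t^k of the ideal (x, t^k) ⊆ A is generated by the two relations t^k·x = x·t^k and y·x = t^{n−k}·t^k. That is, if a·x = b·t^k with a, b ∈ A, then (a,b) is an A-linear combination of (t^k, x) and (y, t^{n−k}). -/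
open MvPolynomial

noncomputable section

/-- `A = R[x,y]/(xy − tⁿ)`. -/
abbrev DoublePointRing (R : Type*) [CommRing R] (t : R) (n : ℕ) : Type _ :=
  MvPolynomial (Fin 2) R ⧸ (Ideal.span {(X 0 : MvPolynomial (Fin 2) R) * X 1 - C (t ^ n)})

/- A relation `A u = B p` modulo `g` holds in `S` up to `f g`; subtracting `f (v, q)` from
`(A, B)` leaves a relation in `S`, which `hsyz` writes as a multiple of `(p, u)`. -/
theorem Ideal.Quotient.exists_syzygy_combination {S : Type*} [CommRing S] {g u v p q : S}
    (hg : g = u * v - p * q)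
    (hsyz : ∀ α β : S, u * α = p * β → ∃ c, α = p * c ∧ β = u * c)
    {a b : S ⧸ Ideal.span {g}} (h : a * mk _ u = b * mk _ p) :
    ∃ c d : S ⧸ Ideal.span {g}, a = c * mk _ p + d * mk _ v ∧ b = c * mk _ u + d * mk _ q := by
  obtain ⟨A, rfl⟩ := mk_surjective a
  obtain ⟨B, rfl⟩ := mk_surjective b
  have hmem : A * u - B * p ∈ Ideal.span {g} := by
    rw [← eq_zero_iff_mem, map_sub, map_mul, map_mul, h, sub_self]
  obtain ⟨f, hf⟩ := Ideal.mem_span_singleton'.1 hmem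
  obtain ⟨c, hA, hB⟩ := hsyz (A - f * v) (B - f * q) (by linear_combination f * hg - hf)
  refine ⟨mk _ c, mk _ f, ?_, ?_⟩
  · rw [show A = c * p + f * v by linear_combination hA, map_add, map_mul, map_mul]
  · rw [show B = c * u + f * q by linear_combination hB, map_add, map_mul, map_mul]

namespace MvPolynomial

variable {R σ : Type*} [CommRing R]

theorem C_dvd_of_X_mul_eq_C_mul {i : σ} {r : R} {p q : MvPolynomial σ R}
    (h : X i * p = C r * q) : C r ∣ p := by
  rw [C_dvd_iff_dvd_coeff]
  intro m
  refine ⟨q.coeff (Finsupp.single i 1 + m), ?_⟩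
  have hcoeff := congrArg (coeff (Finsupp.single i 1 + m)) h
  rwa [coeff_X_mul, coeff_C_mul] at hcoeff

theorem exists_eq_C_mul_and_eq_X_mul [IsDomain R] {i : σ} {r : R} (hr : r ≠ 0)
    {p q : MvPolynomial σ R} (h : X i * p = C r * q) :
    ∃ c, p = C r * c ∧ q = X i * c := by
  obtain ⟨c, rfl⟩ := C_dvd_of_X_mul_eq_C_mul h
  refine ⟨c, rfl, mul_left_cancel₀ (C_ne_zero.2 hr) ?_⟩
  rw [← h]
  ring

end MvPolynomial

theorem statement1_general (R : Type*) [CommRing R] [IsDomain R]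
    (t : R) (ht : Irreducible t) (n k : ℕ) (hk : k < n)
    (a b : DoublePointRing R t n)
    (x y τ : DoublePointRing R t n)
    (hx : x = Ideal.Quotient.mk _ (X 0)) (hy : y = Ideal.Quotient.mk _ (X 1))
    (hτ : τ = Ideal.Quotient.mk _ (C t))
    (hrel : a * x = b * τ ^ k) :
    ∃ c d : DoublePointRing R t n,
      a = c * τ ^ k + d * y ∧ b = c * x + d * τ ^ (n - k) := by
  subst hx hy hτ
  simp only [← map_pow] at hrel ⊢
  have hsplit : (X 0 * X 1 - C (t ^ n) : MvPolynomial (Fin 2) R) =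
      X 0 * X 1 - C (t ^ k) * C (t ^ (n - k)) := by
    rw [← C_mul, ← pow_add, Nat.add_sub_cancel' hk.le]
  exact Ideal.Quotient.exists_syzygy_combination hsplit
    (fun _ _ => exists_eq_C_mul_and_eq_X_mul (pow_ne_zero k ht.ne_zero)) hrel

theorem statement1 (R : Type*) [CommRing R] [IsDomain R] [IsDiscreteValuationRing R]
    (t : R) (ht : Irreducible t) (n k : ℕ) (hn : 1 ≤ n) (hk : k < n)
    (a b : DoublePointRing R t n)
    (x y τ : DoublePointRing R t n)
    (hx : x = Ideal.Quotient.mk _ (X 0)) (hy : y = Ideal.Quotient.mk _ (X 1))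
    (hτ : τ = Ideal.Quotient.mk _ (C t))
    (hrel : a * x = b * τ ^ k) :
    ∃ c d : DoublePointRing R t n,
      a = c * τ ^ k + d * y ∧ b = c * x + d * τ ^ (n - k) :=
  statement1_general R t ht n k hk a b x y τ hx hy hτ hrel

end
end

section
/- Let R be a discrete valuation ring with uniformizer t and fraction field K, and n ≥ 1. Inside K[x,x⁻¹] with y = tⁿ/x, one has R[x,x⁻¹] ∩ R[y,y⁻¹] = R[x,y] (the image of R[x,y]/(xy − tⁿ)). Equivalently, every Laurent polynomial f ∈ K[x,x⁻¹] whose coefficients c_d satisfy c_d ∈ R for all d and c_d ∈ t^{−nd}·R for all d ≤ 0 lies in R[x, tⁿ/x]. -/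
/-! The rescaling `x ↦ tⁿ x` of `K[x,x⁻¹]` sends `y = tⁿ/x` to `x⁻¹`, hence maps `R[y,y⁻¹]` into
`R[x,x⁻¹]`, and it multiplies the coefficient of `xᵈ` by `t^{nd}`. So a Laurent polynomial in both
rings has all coefficients in `R`, and the coefficient of `x⁻ᵏ` in `t^{nk} R`. Each of its monomials
is then `r xᵏ` or `r t^{nk} x⁻ᵏ = r yᵏ`, which lie in `R[x, y]`. -/

open LaurentPolynomial

noncomputable section

namespace LaurentPolynomial

theorem coeff_C_mul_T {K : Type*} [Semiring K] (a : K) (n d : ℤ) :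
    (C a * T n).coeff d = if n = d then a else 0 := by
  rw [← single_eq_C_mul_T, AddMonoidAlgebra.coeff_single, Finsupp.single_apply]

theorem mem_of_forall_C_mul_T_mem_s2 {K : Type*} [Ring K] {P : Subring K[T;T⁻¹]} {f : K[T;T⁻¹]}
    (h : ∀ d, C (f.coeff d) * T d ∈ P) : f ∈ P := by
  rw [← AddMonoidAlgebra.sum_coeff_single f, Finsupp.sum]
  exact P.sum_mem fun d _ => single_eq_C_mul_T (f.coeff d) d ▸ h d

variable {K : Type*} [CommRing K]

def unitCMulT (w : Kˣ) : K[T;T⁻¹]ˣ where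
  val := C ↑w * T 1
  inv := C ↑w⁻¹ * T (-1)
  val_inv := by
    rw [mul_mul_mul_comm, ← map_mul, ← T_add, Units.mul_inv]; simp [T_zero]
  inv_val := by
    rw [mul_mul_mul_comm, ← map_mul, ← T_add, Units.inv_mul]; simp [T_zero]

theorem val_unitCMulT (w : Kˣ) : (unitCMulT w : K[T;T⁻¹]) = C (w : K) * T 1 := rfl

theorem val_inv_unitCMulT (w : Kˣ) : (↑(unitCMulT w)⁻¹ : K[T;T⁻¹]) = C (↑w⁻¹ : K) * T (-1) := rfl

def rescale (w : Kˣ) : K[T;T⁻¹] →+* K[T;T⁻¹] := eval₂ C (unitCMulT w)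

theorem rescale_C (w : Kˣ) (a : K) : rescale w (C a) = C a := eval₂_C _ _ _

theorem rescale_C_mul_T (w : Kˣ) (a : K) (n : ℤ) :
    rescale w (C a * T n) = C (↑(w ^ n) * a) * T n := by
  obtain ⟨k, rfl | rfl⟩ := n.eq_nat_or_neg
  · rw [rescale, eval₂_C_mul_T_n, val_unitCMulT, mul_pow, ← map_pow, T_pow, mul_one,
      zpow_natCast, map_mul, Units.val_pow_eq_pow_val]
    ring
  · rw [rescale, eval₂_C_mul_T_neg_n, val_inv_unitCMulT, mul_pow, ← map_pow, T_pow, mul_neg_one,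
      zpow_neg, zpow_natCast, ← inv_pow, map_mul, Units.val_pow_eq_pow_val]
    ring

theorem coeff_rescale (w : Kˣ) (f : K[T;T⁻¹]) (d : ℤ) :
    (rescale w f).coeff d = ↑(w ^ d) * f.coeff d := by
  induction f using LaurentPolynomial.induction_on' with
  | add p q hp hq => simp [hp, hq, mul_add]
  | C_mul_T n a =>
    rw [rescale_C_mul_T, coeff_C_mul_T, coeff_C_mul_T]
    split_ifs with h
    · rw [h]
    · rw [mul_zero]

end LaurentPolynomial

section DoublePoint

variable {R K : Type*} [CommRing R] [Field K] [Algebra R K]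

theorem ringA_le_range_mapRingHom :
    ringA R K ≤ (AddMonoidAlgebra.mapRingHom ℤ (algebraMap R K)).range := by
  refine Subring.closure_le.2 ?_
  rintro _ (⟨r, rfl⟩ | rfl | rfl)
  · exact ⟨C r, AddMonoidAlgebra.map_single _ r 0⟩
  · exact ⟨T 1, by ext; simp⟩
  · exact ⟨T (-1), by ext; simp⟩

theorem coeff_mem_range_of_mem_ringA {f : K[T;T⁻¹]} (hf : f ∈ ringA R K) (d : ℤ) :
    f.coeff d ∈ (algebraMap R K).range := by
  obtain ⟨g, rfl⟩ := ringA_le_range_mapRingHom hf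
  exact ⟨g.coeff d, (AddMonoidAlgebra.coeff_mapRingHom _ _ _).symm⟩

variable {t : R} {n : ℕ}

theorem ringB_le_comap_rescale (hu : algebraMap R K t ≠ 0) :
    ringB R K t n ≤ (ringA R K).comap (rescale (Units.mk0 (algebraMap R K t) hu ^ n)) := by
  refine Subring.closure_le.2 ?_
  rintro _ (⟨r, rfl⟩ | rfl | rfl) <;> rw [SetLike.mem_coe, Subring.mem_comap]
  · rw [iotaR, RingHom.comp_apply, rescale_C]
    exact Subring.subset_closure (by simp [iotaR])
  · rw [iotaR, RingHom.comp_apply, ← map_pow, rescale_C_mul_T]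
    exact Subring.subset_closure (by simp [hu])
  · rw [← map_pow, rescale_C_mul_T]
    exact Subring.subset_closure (by simp [hu])

theorem exists_coeff_neg_eq_of_mem_ringB (hu : algebraMap R K t ≠ 0) {f : K[T;T⁻¹]}
    (hf : f ∈ ringB R K t n) (k : ℕ) :
    ∃ r : R, f.coeff (-k) = algebraMap R K (r * t ^ (n * k)) := by
  obtain ⟨r, hr⟩ := coeff_mem_range_of_mem_ringA (ringB_le_comap_rescale hu hf) (-k)
  refine ⟨r, ?_⟩
  have htk : algebraMap R K (t ^ (n * k)) = ↑((Units.mk0 _ hu ^ n) ^ (k : ℤ)) := by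
    simp [pow_mul]
  rw [coeff_rescale] at hr
  rw [map_mul, hr, htk, mul_right_comm, ← Units.val_mul, ← zpow_add, neg_add_cancel, zpow_zero,
    Units.val_one, one_mul]

theorem C_mul_T_natCast_mem_ringM (r : R) (k : ℕ) :
    C (algebraMap R K r) * T k ∈ ringM R K t n := by
  rw [← mul_one (k : ℤ), ← T_pow]
  exact Subring.mul_mem _ (Subring.subset_closure (by simp [iotaR]))
    (Subring.pow_mem _ (Subring.subset_closure (by simp)) _)

theorem C_mul_T_neg_mem_ringM (r : R) (k : ℕ) :
    C (algebraMap R K (r * t ^ (n * k))) * T (-k) ∈ ringM R K t n := by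
  have hmonomial : C (algebraMap R K (r * t ^ (n * k))) * T (-k) =
      iotaR R K r * (iotaR R K t ^ n * T (-1)) ^ k := by
    rw [mul_pow, T_pow, ← pow_mul, mul_neg_one, ← mul_assoc, ← map_pow, ← map_mul]; rfl
  rw [hmonomial]
  exact Subring.mul_mem _ (Subring.subset_closure (by simp))
    (Subring.pow_mem _ (Subring.subset_closure (by simp)) _)

theorem ringM_le_ringA : ringM R K t n ≤ ringA R K := by
  refine Subring.closure_le.2 ?_
  rintro _ (⟨r, rfl⟩ | rfl | rfl)
  · exact Subring.subset_closure (by simp)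
  · exact Subring.subset_closure (by simp)
  · exact Subring.mul_mem _ (Subring.pow_mem _ (Subring.subset_closure (by simp)) _)
      (Subring.subset_closure (by simp))

theorem ringM_le_ringB (hu : algebraMap R K t ≠ 0) : ringM R K t n ≤ ringB R K t n := by
  refine Subring.closure_le.2 ?_
  rintro _ (⟨r, rfl⟩ | rfl | rfl)
  · exact Subring.subset_closure (by simp)
  · have hT : (T 1 : K[T;T⁻¹]) = iotaR R K t ^ n * (C (algebraMap R K t)⁻¹ ^ n * T 1) := by
      rw [iotaR, RingHom.comp_apply, ← mul_assoc, ← mul_pow, ← map_mul, mul_inv_cancel₀ hu,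
        map_one, one_pow, one_mul]
    rw [hT]
    exact Subring.mul_mem _ (Subring.pow_mem _ (Subring.subset_closure (by simp)) _)
      (Subring.subset_closure (by simp))
  · exact Subring.subset_closure (by simp)

end DoublePoint

theorem statement2_general (R K : Type*) [CommRing R]
    [Field K] [Algebra R K] [IsFractionRing R K]
    (t : R) (ht : Irreducible t) (n : ℕ)
    (f : LaurentPolynomial K) :
    (f ∈ ringA R K ∧ f ∈ ringB R K t n) ↔ f ∈ ringM R K t n := by
  have hu : algebraMap R K t ≠ 0 :=
    (map_ne_zero_iff _ (IsFractionRing.injective R K)).2 ht.ne_zero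
  refine ⟨fun ⟨hA, hB⟩ => mem_of_forall_C_mul_T_mem_s2 fun d => ?_,
    fun hM => ⟨ringM_le_ringA hM, ringM_le_ringB hu hM⟩⟩
  obtain ⟨k, rfl | rfl⟩ := d.eq_nat_or_neg
  · obtain ⟨r, hr⟩ := coeff_mem_range_of_mem_ringA hA k
    rw [← hr]
    exact C_mul_T_natCast_mem_ringM r k
  · obtain ⟨r, hr⟩ := exists_coeff_neg_eq_of_mem_ringB hu hB k
    rw [hr]
    exact C_mul_T_neg_mem_ringM r k

theorem statement2 (R K : Type*) [CommRing R] [IsDomain R] [IsDiscreteValuationRing R]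
    [Field K] [Algebra R K] [IsFractionRing R K]
    (t : R) (ht : Irreducible t) (n : ℕ) (hn : 1 ≤ n)
    (f : LaurentPolynomial K) :
    (f ∈ ringA R K ∧ f ∈ ringB R K t n) ↔ f ∈ ringM R K t n :=
  statement2_general R K t ht n f

end
end
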